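/- Let n = pq be a Frobenius pseudoprime with parameters (a,b,c), where p is an odd prime with Jacobi symbol J(c/p) = +1 and z = a+b√c is a unit modulo p. Then z^{q+1} ≡ a² - b²c (mod p) in ℤ[√c]. -/

import Mathlib

/-!
Since `c` is a quadratic residue mod `p`, Euler's criterion gives `(√c)^p = c^((p-1)/2) √c = √c`
in `ℤ[√c]/(p)`, so Frobenius is the identity there: `z^p ≡ z`. Writing `n = pq`, the Frobenius
condition `z^n ≡ z̄ (mod p)` becomes `z^q ≡ z̄`, hence `z^(q+1) ≡ z z̄ = a² - b²c (mod p)`.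
-/

/-- `n` is a Frobenius pseudoprime with parameters `(a, b, c)`:
a composite odd non-square natural number, coprime to `a*b*c`, with `c`
squarefree, Jacobi symbol `J(c/n) = -1`, satisfying
`(a + b√c)^n ≡ a - b√c (mod n)` in `ℤ[√c]`. -/
def IsFPP (a b c : ℤ) (n : ℕ) : Prop :=
  1 < n ∧ ¬ n.Prime ∧ Odd n ∧ ¬ IsSquare n ∧
  IsCoprime (a * b * c) (n : ℤ) ∧ Squarefree c ∧ jacobiSym c n = -1 ∧
  (n : Zsqrtd c) ∣ ((⟨a, b⟩ : Zsqrtd c) ^ n - star (⟨a, b⟩ : Zsqrtd c))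

theorem pow_char_eq_self_of_sq_eq_intCast {R : Type*} [CommRing R] {p : ℕ} [Fact p.Prime]
    [CharP R p] (hodd : Odd p) {c : ℤ} (hc : legendreSym p c = 1) {s : R}
    (hs : s ^ 2 = c) : s ^ p = s := by
  have heuler : (c : R) ^ (p / 2) = 1 := by
    have := congrArg (ZMod.castHom (dvd_refl p) R) (legendreSym.eq_pow p c)
    rw [hc, map_pow, map_intCast, map_intCast, Int.cast_one] at this
    exact this.symm
  obtain ⟨k, rfl⟩ := hodd
  rw [show (2 * k + 1) / 2 = k by omega] at heuler
  rw [pow_succ, pow_mul, hs, heuler, one_mul]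

namespace Zsqrtd

theorem natCast_mem_nonunits {d : ℤ} {p : ℕ} (hp : p.Prime) : (p : ℤ√d) ∈ nonunits (ℤ√d) := by
  rw [mem_nonunits_iff, isUnit_iff_norm_isUnit, norm_natCast, IsUnit.mul_iff, and_self,
    Int.isUnit_iff_natAbs_eq, Int.natAbs_natCast]
  exact hp.ne_one

instance charP_quotient_span_natCast {d : ℤ} (p : ℕ) [hp : Fact p.Prime] :
    CharP (ℤ√d ⧸ Ideal.span {(p : ℤ√d)}) p :=
  CharP.quotient _ p (natCast_mem_nonunits hp.out)

theorem mk_pow_prime_eq_self {c : ℤ} {p : ℕ} [Fact p.Prime] (hodd : Odd p)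
    (hc : legendreSym p c = 1) (z : ℤ√c) :
    Ideal.Quotient.mk (Ideal.span {(p : ℤ√c)}) z ^ p = Ideal.Quotient.mk _ z := by
  set f := Ideal.Quotient.mk (Ideal.span {(p : ℤ√c)})
  have hs : f sqrtd ^ 2 = c := by rw [sq, ← map_mul, dmuld, map_intCast]
  have hfrob (m : ℤ) : (m : ℤ√c ⧸ Ideal.span {(p : ℤ√c)}) ^ p = m :=
    map_intCast (frobenius _ p) m
  obtain ⟨x, y⟩ := z
  rw [decompose, map_add, map_mul, map_intCast, map_intCast, add_pow_char, mul_pow,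
    pow_char_eq_self_of_sq_eq_intCast hodd hc hs, hfrob, hfrob]

end Zsqrtd

theorem stmt_4_general (a b c : ℤ) (n p q : ℕ) (hn : IsFPP a b c n) (hpq : n = p * q)
    (hp : p.Prime) (hodd : Odd p) (hJ : jacobiSym c p = 1) :
    (p : Zsqrtd c) ∣ ((⟨a, b⟩ : Zsqrtd c) ^ (q + 1) - ((a ^ 2 - b ^ 2 * c : ℤ) : Zsqrtd c)) := by
  have : Fact p.Prime := ⟨hp⟩
  set z : ℤ√c := ⟨a, b⟩
  set f := Ideal.Quotient.mk (Ideal.span {(p : ℤ√c)})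
  have hzn : f z ^ n = f (star z) := by
    rw [← map_pow, ← sub_eq_zero, ← map_sub, Ideal.Quotient.eq_zero_iff_dvd]
    exact (Nat.cast_dvd_cast (Dvd.intro q hpq.symm)).trans hn.2.2.2.2.2.2.2
  have hzq : f z ^ q = f (star z) := by
    rw [← hzn, hpq, pow_mul,
      Zsqrtd.mk_pow_prime_eq_self hodd (by rwa [jacobiSym.legendreSym.to_jacobiSym])]
  have hnorm : ((a ^ 2 - b ^ 2 * c : ℤ) : ℤ√c) = z * star z := by
    rw [← Zsqrtd.norm_eq_mul_conj, Zsqrtd.norm_def]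
    congr 1
    ring
  rw [← Ideal.Quotient.eq_zero_iff_dvd, map_sub, sub_eq_zero, hnorm, pow_succ, map_mul, map_pow,
    hzq, map_mul, mul_comm]

/-- Theorem 1(b): if n = pq is an FPP with parameters (a,b,c), p an odd prime with
J(c/p) = +1 and z = a+b√c a unit mod p, then z^(q+1) ≡ a² - b²c (mod p). -/
theorem stmt_4 (a b c : ℤ) (n p q : ℕ) (hn : IsFPP a b c n) (hpq : n = p * q)
    (hp : p.Prime) (hodd : Odd p) (hJ : jacobiSym c p = 1)
    (hu : IsUnit (Ideal.Quotient.mk (Ideal.span {(p : Zsqrtd c)}) (⟨a, b⟩ : Zsqrtd c))) :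
    (p : Zsqrtd c) ∣ ((⟨a, b⟩ : Zsqrtd c) ^ (q + 1) - ((a ^ 2 - b ^ 2 * c : ℤ) : Zsqrtd c)) :=
  stmt_4_general a b c n p q hn hpq hp hodd hJ
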